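/- Let m ≥ 1, 1 ≤ k ≤ m, and g ∈ ℝᵐ. Let Q̃ be the random m×k matrix consisting of the first k columns of an m×m random orthogonal matrix distributed according to the Haar probability measure on O(m). Then E[‖g − (m/k)·Q̃ Q̃ᵀ g‖²] = (m/k − 1)·‖g‖². In particular, the haar-k compressor is an ω-unbiased compressor with ω = m/k − 1. -/

import Mathlib

/-!
For orthogonal `Q`, `P = Q̃ Q̃ᵀ` is a symmetric idempotent of trace `k`, so
`‖g - c P g‖² = ‖g‖² + (c² - 2c) ⟪g, P g⟫`. Haar invariance makes `E[P]` commute with every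
orthogonal matrix (left translation by `U` conjugates `P` by `U`); conjugating by coordinate
reflections and transpositions shows such a matrix is scalar, and its trace is `E[tr P] = k`,
so `E[P] = (k/m) I`. With `c = m/k` one has `(c² - 2c) (k/m) = m/k - 2`.
-/

open Matrix MeasureTheory

def firstCols {m : ℕ} (k : ℕ) (hkm : k ≤ m) (Q : Fin m → Fin m → ℝ) :
    Matrix (Fin m) (Fin k) ℝ :=
  (Matrix.of Q).submatrix id (Fin.castLE hkm)

namespace Matrix

variable {n : Type*} [Fintype n]

section OrthogonalConj

variable [DecidableEq n] {M : Matrix n n ℝ}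

theorem apply_eq_zero_of_forall_orthogonal_conj_eq
    (hM : ∀ U : Matrix n n ℝ, Uᵀ * U = 1 → U * M * Uᵀ = M) {i j : n} (hij : i ≠ j) :
    M i j = 0 := by
  -- conjugating by the reflection `eᵢ ↦ -eᵢ` negates the `(i, j)` entry
  set d : n → ℝ := fun l => if l = i then -1 else 1
  have hd : (diagonal d)ᵀ * diagonal d = 1 := by
    rw [diagonal_transpose, diagonal_mul_diagonal, ← diagonal_one]
    congr 1
    funext l
    by_cases h : l = i <;> simp [d, h]
  have hneg := congr_fun₂ (hM _ hd) i j
  simp only [diagonal_transpose, mul_diagonal, diagonal_mul, ↓reduceIte, neg_mul, one_mul,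
    hij.symm, mul_one, d] at hneg
  linarith

theorem apply_self_eq_of_forall_orthogonal_conj_eq
    (hM : ∀ U : Matrix n n ℝ, Uᵀ * U = 1 → U * M * Uᵀ = M) (i j : n) : M i i = M j j := by
  have hswap := congr_fun₂ (hM (swap ℝ i j) (by rw [transpose_swap, swap_mul_self])) i i
  simpa using hswap.symm

theorem eq_trace_div_card_smul_one_of_forall_orthogonal_conj_eq
    (hM : ∀ U : Matrix n n ℝ, Uᵀ * U = 1 → U * M * Uᵀ = M) :
    M = (M.trace / Fintype.card n) • 1 := by
  ext i j
  have hcard : (Fintype.card n : ℝ) ≠ 0 := Nat.cast_ne_zero.mpr (Fintype.card_pos_iff.mpr ⟨i⟩).ne'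
  have htrace : M.trace = Fintype.card n * M i i := by
    simp [trace, apply_self_eq_of_forall_orthogonal_conj_eq hM _ i]
  rcases eq_or_ne i j with rfl | hij
  · simp [htrace, hcard]
  · simp [apply_eq_zero_of_forall_orthogonal_conj_eq hM hij, hij]

end OrthogonalConj

theorem abs_apply_le_one_of_isSymm_of_isIdempotentElem {P : Matrix n n ℝ} (hS : P.IsSymm)
    (hP : IsIdempotentElem P) (i j : n) : |P i j| ≤ 1 := by
  have hdiag : ∀ a, P a a = ∑ l, P a l ^ 2 := fun a => by
    conv_lhs => rw [← hP.eq]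
    simp only [mul_apply, sq]
    exact Finset.sum_congr rfl fun l _ => by rw [← hS.apply a l]
  have hsq_le : ∀ a b, P a b ^ 2 ≤ P a a := fun a b => by
    rw [hdiag a]
    exact Finset.single_le_sum (fun l _ => sq_nonneg (P a l)) (Finset.mem_univ b)
  have hii : P i i ≤ 1 := by nlinarith [hsq_le i i]
  rw [← sq_le_one_iff_abs_le_one]
  exact (hsq_le i j).trans hii

theorem norm_sub_smul_toEuclideanLin_sq [DecidableEq n] {P : Matrix n n ℝ} (hS : P.IsSymm)
    (hP : IsIdempotentElem P) (c : ℝ) (g : EuclideanSpace ℝ n) :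
    ‖g - c • toEuclideanLin P g‖ ^ 2 = ‖g‖ ^ 2 + (c ^ 2 - 2 * c) * (g.ofLp ⬝ᵥ P *ᵥ g.ofLp) := by
  have hinner : inner ℝ g (toEuclideanLin P g) = g.ofLp ⬝ᵥ P *ᵥ g.ofLp := by
    simp [EuclideanSpace.inner_eq_star_dotProduct, toLpLin_apply, dotProduct_comm]
  have hT : (toEuclideanLin P).IsSymmetric :=
    isSymmetric_toEuclideanLin_iff.mpr (by rwa [IsHermitian, conjTranspose_eq_transpose_of_trivial])
  have hnorm : ‖toEuclideanLin P g‖ ^ 2 = g.ofLp ⬝ᵥ P *ᵥ g.ofLp := by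
    rw [← real_inner_self_eq_norm_sq, hT, ← hinner]
    simp [toLpLin_apply, mulVec_mulVec, hP.eq]
  rw [norm_sub_sq_real, inner_smul_right, norm_smul, mul_pow, Real.norm_eq_abs, sq_abs, hinner,
    hnorm]
  ring

section EntrywiseIntegral

variable {X ι κ : Type*} [MeasurableSpace X] {μ : Measure X}

/-- Matrices carry no global normed structure, so the expectation of a random matrix is taken
entry by entry. -/
noncomputable def entrywiseIntegral (μ : Measure X) (F : X → Matrix ι κ ℝ) : Matrix ι κ ℝ :=
  of fun i j => ∫ x, F x i j ∂μ

variable [Fintype ι] [Fintype κ] {F : X → Matrix ι κ ℝ}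

theorem integral_mul_mul_apply {ι' κ' : Type*} (hF : ∀ i j, Integrable (fun x => F x i j) μ)
    (A : Matrix ι' ι ℝ) (B : Matrix κ κ' ℝ) (i : ι') (j : κ') :
    ∫ x, (A * F x * B) i j ∂μ = (A * entrywiseIntegral μ F * B) i j := by
  simp only [mul_apply, Finset.sum_mul]
  rw [integral_finsetSum _ fun b _ => integrable_finsetSum _ fun a _ =>
    ((hF a b).const_mul _).mul_const _]
  refine Finset.sum_congr rfl fun b _ => ?_
  rw [integral_finsetSum _ fun a _ => ((hF a b).const_mul _).mul_const _]
  refine Finset.sum_congr rfl fun a _ => ?_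
  rw [integral_mul_const, integral_const_mul, entrywiseIntegral, of_apply]

theorem integrable_dotProduct_mulVec (hF : ∀ i j, Integrable (fun x => F x i j) μ)
    (v : ι → ℝ) (w : κ → ℝ) : Integrable (fun x => v ⬝ᵥ F x *ᵥ w) μ := by
  simp only [dotProduct, mulVec, Finset.mul_sum]
  exact integrable_finsetSum _ fun i _ => integrable_finsetSum _ fun j _ =>
    ((hF i j).mul_const _).const_mul _

theorem integral_dotProduct_mulVec (hF : ∀ i j, Integrable (fun x => F x i j) μ)
    (v : ι → ℝ) (w : κ → ℝ) :
    ∫ x, v ⬝ᵥ F x *ᵥ w ∂μ = v ⬝ᵥ entrywiseIntegral μ F *ᵥ w := by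
  simp only [dotProduct, mulVec, Finset.mul_sum]
  rw [integral_finsetSum _ fun i _ => integrable_finsetSum _ fun j _ =>
    ((hF i j).mul_const _).const_mul _]
  refine Finset.sum_congr rfl fun i _ => ?_
  rw [integral_finsetSum _ fun j _ => ((hF i j).mul_const _).const_mul _]
  refine Finset.sum_congr rfl fun j _ => ?_
  rw [integral_const_mul, integral_mul_const, entrywiseIntegral, of_apply]

theorem integral_trace {F : X → Matrix ι ι ℝ} (hF : ∀ i j, Integrable (fun x => F x i j) μ) :
    ∫ x, (F x).trace ∂μ = (entrywiseIntegral μ F).trace := by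
  simp only [trace, diag]
  exact integral_finsetSum _ fun i _ => hF i i

end EntrywiseIntegral

end Matrix

section FirstCols

variable {m k : ℕ} (hkm : k ≤ m)

def colProj (Q : Fin m → Fin m → ℝ) : Matrix (Fin m) (Fin m) ℝ :=
  firstCols k hkm Q * (firstCols k hkm Q)ᵀ

theorem firstCols_transpose_mul_self {Q : Fin m → Fin m → ℝ}
    (hQ : (of Q)ᵀ * of Q = 1) : (firstCols k hkm Q)ᵀ * firstCols k hkm Q = 1 := by
  rw [firstCols, transpose_submatrix, ← submatrix_mul _ _ _ _ _ Function.bijective_id, hQ,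
    submatrix_one _ (Fin.castLE_injective hkm)]

theorem firstCols_of_symm_mul (U : Matrix (Fin m) (Fin m) ℝ) (Q : Fin m → Fin m → ℝ) :
    firstCols k hkm (of.symm (U * of Q)) = U * firstCols k hkm Q := by
  rw [firstCols, firstCols, Equiv.apply_symm_apply, ← submatrix_id_id U,
    ← submatrix_mul _ _ _ _ _ Function.bijective_id, submatrix_id_id]

theorem colProj_isSymm (Q : Fin m → Fin m → ℝ) : (colProj hkm Q).IsSymm := by
  simp [colProj, IsSymm, transpose_mul]

theorem colProj_isIdempotentElem {Q : Fin m → Fin m → ℝ} (hQ : (of Q)ᵀ * of Q = 1) :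
    IsIdempotentElem (colProj hkm Q) := by
  rw [IsIdempotentElem, colProj, Matrix.mul_assoc, ← Matrix.mul_assoc (firstCols k hkm Q)ᵀ,
    firstCols_transpose_mul_self hkm hQ, Matrix.one_mul]

theorem trace_colProj {Q : Fin m → Fin m → ℝ} (hQ : (of Q)ᵀ * of Q = 1) :
    (colProj hkm Q).trace = k := by
  rw [colProj, trace_mul_comm, firstCols_transpose_mul_self hkm hQ, trace_one, Fintype.card_fin]

theorem colProj_of_symm_mul (U : Matrix (Fin m) (Fin m) ℝ) (Q : Fin m → Fin m → ℝ) :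
    colProj hkm (of.symm (U * of Q)) = U * colProj hkm Q * Uᵀ := by
  rw [colProj, colProj, firstCols_of_symm_mul, transpose_mul, Matrix.mul_assoc, Matrix.mul_assoc,
    Matrix.mul_assoc]

theorem continuous_colProj_apply (i j : Fin m) : Continuous fun Q => colProj hkm Q i j := by
  simp only [colProj, firstCols, mul_apply]
  fun_prop

end FirstCols

section Haar

variable {m k : ℕ} {μ : Measure (Fin m → Fin m → ℝ)} [IsProbabilityMeasure μ]

theorem ae_transpose_mul_self_eq_one (hsupp : μ {Q | (of Q)ᵀ * of Q = 1} = 1) :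
    ∀ᵐ Q ∂μ, (of Q)ᵀ * of Q = 1 := by
  have hmeas : MeasurableSet {Q : Fin m → Fin m → ℝ | (of Q)ᵀ * of Q = 1} :=
    (isClosed_eq (by fun_prop) continuous_const).measurableSet
  rw [ae_iff_measure_eq hmeas.nullMeasurableSet, hsupp, measure_univ]

theorem integrable_colProj_apply (hkm : k ≤ m) (hsupp : μ {Q | (of Q)ᵀ * of Q = 1} = 1)
    (i j : Fin m) : Integrable (fun Q => colProj hkm Q i j) μ := by
  refine .of_bound (continuous_colProj_apply hkm i j).aestronglyMeasurable 1 ?_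
  filter_upwards [ae_transpose_mul_self_eq_one hsupp] with Q hQ
  exact abs_apply_le_one_of_isSymm_of_isIdempotentElem (colProj_isSymm hkm Q)
    (colProj_isIdempotentElem hkm hQ) i j

theorem orthogonal_conj_entrywiseIntegral_colProj (hkm : k ≤ m)
    (hsupp : μ {Q | (of Q)ᵀ * of Q = 1} = 1) {U : Matrix (Fin m) (Fin m) ℝ}
    (hU : Measure.map (fun Q => of.symm (U * of Q)) μ = μ) :
    U * entrywiseIntegral μ (colProj hkm) * Uᵀ = entrywiseIntegral μ (colProj hkm) := by
  ext i j
  have hcont : Continuous fun Q : Fin m → Fin m → ℝ => of.symm (U * of Q) :=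
    continuous_const.matrix_mul continuous_id
  rw [← integral_mul_mul_apply (integrable_colProj_apply hkm hsupp), entrywiseIntegral, of_apply]
  conv_rhs => rw [← hU]
  rw [integral_map hcont.measurable.aemeasurable
    (continuous_colProj_apply hkm i j).aestronglyMeasurable]
  simp only [colProj_of_symm_mul]

theorem trace_entrywiseIntegral_colProj (hkm : k ≤ m) (hsupp : μ {Q | (of Q)ᵀ * of Q = 1} = 1) :
    (entrywiseIntegral μ (colProj hkm)).trace = k := by
  rw [← integral_trace (integrable_colProj_apply hkm hsupp), integral_congr_ae
    ((ae_transpose_mul_self_eq_one hsupp).mono fun Q hQ => trace_colProj hkm hQ)]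
  simp

theorem entrywiseIntegral_colProj (hkm : k ≤ m) (hsupp : μ {Q | (of Q)ᵀ * of Q = 1} = 1)
    (hinv : ∀ U : Matrix (Fin m) (Fin m) ℝ, Uᵀ * U = 1 →
      Measure.map (fun Q => of.symm (U * of Q)) μ = μ) :
    entrywiseIntegral μ (colProj hkm) = ((k : ℝ) / m) • 1 := by
  rw [eq_trace_div_card_smul_one_of_forall_orthogonal_conj_eq fun U hU =>
      orthogonal_conj_entrywiseIntegral_colProj hkm hsupp (hinv U hU),
    trace_entrywiseIntegral_colProj hkm hsupp, Fintype.card_fin]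

end Haar

theorem haar_k_omega_unbiased_general (m k : ℕ) (hk : 1 ≤ k) (hkm : k ≤ m)
    (g : EuclideanSpace ℝ (Fin m))
    (μ : Measure (Fin m → Fin m → ℝ)) [IsProbabilityMeasure μ]
    (hsupp : μ {Q | (Matrix.of Q)ᵀ * (Matrix.of Q) = 1} = 1)
    (hinv : ∀ U : Matrix (Fin m) (Fin m) ℝ, Uᵀ * U = 1 →
      Measure.map (fun Q => Matrix.of.symm (U * Matrix.of Q)) μ = μ) :
    ∫ Q, ‖g - ((m : ℝ) / k) •
        Matrix.toEuclideanLin ((firstCols k hkm Q) * (firstCols k hkm Q)ᵀ) g‖ ^ 2 ∂μ =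
      ((m : ℝ) / k - 1) * ‖g‖ ^ 2 := by
  change ∫ Q, ‖g - ((m : ℝ) / k) • toEuclideanLin (colProj hkm Q) g‖ ^ 2 ∂μ = _
  have hk0 : (k : ℝ) ≠ 0 := Nat.cast_ne_zero.mpr (by omega)
  have hm0 : (m : ℝ) ≠ 0 := Nat.cast_ne_zero.mpr (by omega)
  have hF := integrable_colProj_apply hkm hsupp
  have hexpand : ∀ᵐ Q ∂μ, ‖g - ((m : ℝ) / k) • toEuclideanLin (colProj hkm Q) g‖ ^ 2 =
      ‖g‖ ^ 2 + (((m : ℝ) / k) ^ 2 - 2 * (m / k)) * (g.ofLp ⬝ᵥ colProj hkm Q *ᵥ g.ofLp) := by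
    filter_upwards [ae_transpose_mul_self_eq_one hsupp] with Q hQ
    exact norm_sub_smul_toEuclideanLin_sq (colProj_isSymm hkm Q) (colProj_isIdempotentElem hkm hQ)
      _ g
  rw [integral_congr_ae hexpand, integral_add (integrable_const _)
    ((integrable_dotProduct_mulVec hF _ _).const_mul _), integral_const, integral_const_mul,
    integral_dotProduct_mulVec hF, entrywiseIntegral_colProj hkm hsupp hinv, smul_mulVec,
    one_mulVec, dotProduct_smul, ← real_inner_self_eq_norm_sq,
    EuclideanSpace.inner_eq_star_dotProduct]
  simp only [probReal_univ, star_trivial, smul_eq_mul, one_mul]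
  field_simp
  ring

/-- For `Q̃` the first `k` columns of a Haar-distributed orthogonal matrix and
any `g ∈ ℝᵐ`, `E[‖g − (m/k)·Q̃ Q̃ᵀ g‖²] = (m/k − 1)·‖g‖²`: the haar-k compressor is
`ω`-unbiased with `ω = m/k − 1`.  The Haar measure is characterized as a probability measure
supported on the orthogonal matrices and invariant under left translation by any orthogonal
matrix. -/
theorem haar_k_omega_unbiased (m k : ℕ) (hm : 1 ≤ m) (hk : 1 ≤ k) (hkm : k ≤ m)
    (g : EuclideanSpace ℝ (Fin m))
    (μ : Measure (Fin m → Fin m → ℝ)) [IsProbabilityMeasure μ]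
    (hsupp : μ {Q | (Matrix.of Q)ᵀ * (Matrix.of Q) = 1} = 1)
    (hinv : ∀ U : Matrix (Fin m) (Fin m) ℝ, Uᵀ * U = 1 →
      Measure.map (fun Q => Matrix.of.symm (U * Matrix.of Q)) μ = μ) :
    ∫ Q, ‖g - ((m : ℝ) / k) •
        Matrix.toEuclideanLin ((firstCols k hkm Q) * (firstCols k hkm Q)ᵀ) g‖ ^ 2 ∂μ =
      ((m : ℝ) / k - 1) * ‖g‖ ^ 2 :=
  haar_k_omega_unbiased_general m k hk hkm g μ hsupp hinv
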